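/- (Inhabited pattern types give inhabited environments) In system P: (1) If Γ ⊩ p : A for a pattern p and the multiset type A is inhabited (there is a closed term u with ⊢ u : A), then every multiset type in the image of Γ is inhabited. (2) Conversely, if Γ ⊢ t : A and every multiset type assigned by Γ is inhabited, then A is inhabited. -/

import Mathlib

/-! # The pair pattern calculus Λ_p and the type system P -/

/-- Patterns: p ::= x | ⟨p,q⟩ -/
inductive Pat : Type
  | var : ℕ → Pat
  | pair : Pat → Pat → Pat
  deriving DecidableEq

/-- Free variables of a pattern. -/
def Pat.fv : Pat → Finset ℕ
  | .var x => {x}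
  | .pair p q => p.fv ∪ q.fv

/-- Linearity: every variable occurs at most once in the pattern. -/
def Pat.Linear : Pat → Prop
  | .var _ => True
  | .pair p q => p.Linear ∧ q.Linear ∧ Disjoint p.fv q.fv

/-- Terms: t ::= x | λp.t | ⟨t,u⟩ | t u | t[p/u] | fail -/
inductive Tm : Type
  | var : ℕ → Tm
  | lam : Pat → Tm → Tm
  | pair : Tm → Tm → Tm
  | app : Tm → Tm → Tm
  | esub : Tm → Pat → Tm → Tm   -- explicit matching t[p/u]
  | fail : Tm
  deriving DecidableEq

/-- Free variables of a term. -/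
def Tm.fv : Tm → Finset ℕ
  | .var x => {x}
  | .lam p t => t.fv \ p.fv
  | .pair t u => t.fv ∪ u.fv
  | .app t u => t.fv ∪ u.fv
  | .esub t p u => (t.fv \ p.fv) ∪ u.fv
  | .fail => ∅

/-- Substitution of u for the free occurrences of x. -/
def Tm.subst (x : ℕ) (u : Tm) : Tm → Tm
  | .var y => if y = x then u else .var y
  | .lam p t => if x ∈ p.fv then .lam p t else .lam p (Tm.subst x u t)
  | .pair a b => .pair (Tm.subst x u a) (Tm.subst x u b)
  | .app a b => .app (Tm.subst x u a) (Tm.subst x u b)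
  | .esub t p v => .esub (if x ∈ p.fv then t else Tm.subst x u t) p (Tm.subst x u v)
  | .fail => .fail

/-- List contexts L ::= □ | L[p/t], represented as lists of explicit matchings
(head = outermost). -/
abbrev LCtx : Type := List (Pat × Tm)

/-- Plugging a term in a list context. -/
def LCtx.plug : LCtx → Tm → Tm
  | [], t => t
  | (p, u) :: L, t => .esub (LCtx.plug L t) p u

/-- Root reduction rules (r₁)–(r₉). -/
inductive Root : Tm → Tm → Prop
  | r1 (L : LCtx) (p t u) : Root (.app (L.plug (.lam p t)) u) (L.plug (.esub t p u))
  | r2 (t x u) : Root (.esub t (.var x) u) (Tm.subst x u t)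
  | r3 (t p₁ p₂ L u₁ u₂) :
      Root (.esub t (.pair p₁ p₂) (LCtx.plug L (.pair u₁ u₂)))
           (LCtx.plug L (.esub (.esub t p₁ u₁) p₂ u₂))
  | r4 (t p₁ p₂ L q u) : Root (.esub t (.pair p₁ p₂) (LCtx.plug L (.lam q u))) .fail
  | r5 (L : LCtx) (t u v) : Root (.app (L.plug (.pair t u)) v) .fail
  | r6 (t p₁ p₂) : Root (.esub t (.pair p₁ p₂) .fail) .fail
  | r7 (L : LCtx) : L ≠ [] → Root (L.plug .fail) .fail
  | r8 (t) : Root (.app .fail t) .fail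
  | r9 (p) : Root (.lam p .fail) .fail

/-- The reduction relation: contextual closure of the root rules. -/
inductive Step : Tm → Tm → Prop
  | root {t t'} : Root t t' → Step t t'
  | lam {t t'} (p) : Step t t' → Step (.lam p t) (.lam p t')
  | pairL {t t'} (u) : Step t t' → Step (.pair t u) (.pair t' u)
  | pairR {u u'} (t) : Step u u' → Step (.pair t u) (.pair t u')
  | appL {t t'} (u) : Step t t' → Step (.app t u) (.app t' u)
  | appR {u u'} (t) : Step u u' → Step (.app t u) (.app t u')
  | subL {t t'} (p u) : Step t t' → Step (.esub t p u) (.esub t' p u)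
  | subR {u u'} (t p) : Step u u' → Step (.esub t p u) (.esub t p u')

/-- Root rules without the substitution rule (r₂). -/
inductive RootA0 : Tm → Tm → Prop
  | r1 (L : LCtx) (p t u) : RootA0 (.app (L.plug (.lam p t)) u) (L.plug (.esub t p u))
  | r3 (t p₁ p₂ L u₁ u₂) :
      RootA0 (.esub t (.pair p₁ p₂) (LCtx.plug L (.pair u₁ u₂)))
             (LCtx.plug L (.esub (.esub t p₁ u₁) p₂ u₂))
  | r4 (t p₁ p₂ L q u) : RootA0 (.esub t (.pair p₁ p₂) (LCtx.plug L (.lam q u))) .fail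
  | r5 (L : LCtx) (t u v) : RootA0 (.app (L.plug (.pair t u)) v) .fail
  | r6 (t p₁ p₂) : RootA0 (.esub t (.pair p₁ p₂) .fail) .fail
  | r7 (L : LCtx) : L ≠ [] → RootA0 (L.plug .fail) .fail
  | r8 (t) : RootA0 (.app .fail t) .fail
  | r9 (p) : RootA0 (.lam p .fail) .fail

/-- Reduction without rule (r₂). -/
inductive StepA0 : Tm → Tm → Prop
  | root {t t'} : RootA0 t t' → StepA0 t t'
  | lam {t t'} (p) : StepA0 t t' → StepA0 (.lam p t) (.lam p t')
  | pairL {t t'} (u) : StepA0 t t' → StepA0 (.pair t u) (.pair t' u)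
  | pairR {u u'} (t) : StepA0 u u' → StepA0 (.pair t u) (.pair t u')
  | appL {t t'} (u) : StepA0 t t' → StepA0 (.app t u) (.app t' u)
  | appR {u u'} (t) : StepA0 u u' → StepA0 (.app t u) (.app t u')
  | subL {t t'} (p u) : StepA0 t t' → StepA0 (.esub t p u) (.esub t' p u)
  | subR {u u'} (t p) : StepA0 u u' → StepA0 (.esub t p u) (.esub t p u')

/-- Many-step reduction. -/
abbrev Steps : Tm → Tm → Prop := Relation.ReflTransGen Step

/-! ## Types and the type system P -/

/-- Types σ ::= α | ⟨A,B⟩ | A → σ, where multiset types A are represented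
as lists of types. -/
inductive Ty : Type
  | base : ℕ → Ty
  | prod : List Ty → List Ty → Ty
  | arr : List Ty → Ty → Ty

/-- Typing environments: functions from variables to multiset types. -/
def Env : Type := ℕ → List Ty

/-- Sum of environments (pointwise multiset union). -/
def Env.add (Γ Δ : Env) : Env := fun x => Γ x ++ Δ x

/-- Empty environment. -/
def Env.empty : Env := fun _ => []

/-- The environment x : A. -/
def Env.single (x : ℕ) (A : List Ty) : Env := fun y => if y = x then A else []

/-- Γ|_p : restriction of Γ to the free variables of p. -/
def Env.restrict (Γ : Env) (p : Pat) : Env := fun x => if x ∈ p.fv then Γ x else []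

/-- Γ \ Γ|_p. -/
def Env.erase (Γ : Env) (p : Pat) : Env := fun x => if x ∈ p.fv then [] else Γ x

/-- Pattern typing Γ ⊩ p : A. -/
inductive PatTy : Env → Pat → List Ty → Prop
  | var (x : ℕ) (A : List Ty) : PatTy (Env.single x A) (.var x) A
  | pair {Γ Δ p q A B} : PatTy Γ p A → PatTy Δ q B → Disjoint p.fv q.fv →
      PatTy (Γ.add Δ) (.pair p q) [Ty.prod A B]

mutual
  /-- Typing derivations Γ ⊢ t : σ of system P (rules ax, abs, app, pair, sub). -/
  inductive TDeriv : Env → Tm → Ty → Type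
    | ax (x : ℕ) (σ : Ty) : TDeriv (Env.single x [σ]) (.var x) σ
    | abs {Γ t σ p A} : TDeriv Γ t σ → PatTy (Γ.restrict p) p A →
        TDeriv (Γ.erase p) (.lam p t) (.arr A σ)
    | app {Γ Δ t u A σ} : TDeriv Γ t (.arr A σ) → MDeriv Δ u A →
        TDeriv (Γ.add Δ) (.app t u) σ
    | pair {Γ Δ t u A B} : MDeriv Γ t A → MDeriv Δ u B →
        TDeriv (Γ.add Δ) (.pair t u) (.prod A B)
    | esub {Γ Δ t σ p A u} : TDeriv Γ t σ → PatTy (Γ.restrict p) p A → MDeriv Δ u A →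
        TDeriv ((Γ.erase p).add Δ) (.esub t p u) σ
  /-- Multiset typing derivations Γ ⊢ t : A (the rule (many)). -/
  inductive MDeriv : Env → Tm → List Ty → Type
    | nil (t : Tm) : MDeriv Env.empty t []
    | cons {Γ Δ t σ A} : TDeriv Γ t σ → MDeriv Δ t A → MDeriv (Γ.add Δ) t (σ :: A)
end

mutual
  /-- The measure of a derivation: number of typing rules except (many). -/
  def measT : ∀ {Γ t σ}, TDeriv Γ t σ → ℕ
    | _, _, _, .ax _ _ => 1
    | _, _, _, .abs d _ => measT d + 1
    | _, _, _, .app d m => measT d + measM m + 1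
    | _, _, _, .pair m n => measM m + measM n + 1
    | _, _, _, .esub d _ m => measT d + measM m + 1
  def measM : ∀ {Γ t A}, MDeriv Γ t A → ℕ
    | _, _, _, .nil _ => 0
    | _, _, _, .cons d m => measT d + measM m
end

/-- Term contexts with a single hole. -/
inductive TmCtx : Type
  | hole : TmCtx
  | lam : Pat → TmCtx → TmCtx
  | pairL : TmCtx → Tm → TmCtx
  | pairR : Tm → TmCtx → TmCtx
  | appL : TmCtx → Tm → TmCtx
  | appR : Tm → TmCtx → TmCtx
  | subL : TmCtx → Pat → Tm → TmCtx
  | subR : Tm → Pat → TmCtx → TmCtx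

/-- Plugging a term in a term context. -/
def TmCtx.plug : TmCtx → Tm → Tm
  | .hole, t => t
  | .lam p C, t => .lam p (C.plug t)
  | .pairL C u, t => .pair (C.plug t) u
  | .pairR u C, t => .pair u (C.plug t)
  | .appL C u, t => .app (C.plug t) u
  | .appR u C, t => .app u (C.plug t)
  | .subL C p u, t => .esub (C.plug t) p u
  | .subR u p C, t => .esub u p (C.plug t)

mutual
  /-- Typed occurrences of a derivation. -/
  def tocT : ∀ {Γ t σ}, TDeriv Γ t σ → Set TmCtx
    | _, _, _, .ax _ _ => {TmCtx.hole}
    | _, _, _, @TDeriv.abs _ _ _ p _ d _ =>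
        {TmCtx.hole} ∪ (TmCtx.lam p) '' tocT d
    | _, _, _, @TDeriv.app _ _ t u _ _ d m =>
        {TmCtx.hole} ∪ (fun C => TmCtx.appL C u) '' tocT d ∪ (fun C => TmCtx.appR t C) '' tocM m
    | _, _, _, @TDeriv.pair _ _ t u _ _ m n =>
        {TmCtx.hole} ∪ (fun C => TmCtx.pairL C u) '' tocM m ∪ (fun C => TmCtx.pairR t C) '' tocM n
    | _, _, _, @TDeriv.esub _ _ t _ p _ u d _ m =>
        {TmCtx.hole} ∪ (fun C => TmCtx.subL C p u) '' tocT d ∪ (fun C => TmCtx.subR t p C) '' tocM m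
  def tocM : ∀ {Γ t A}, MDeriv Γ t A → Set TmCtx
    | _, _, _, .nil _ => ∅
    | _, _, _, .cons d m => tocT d ∪ tocM m
end

/-- Head contexts H ::= □ | λp.H | H t | H[p/t]. -/
inductive HCtx : Type
  | hole : HCtx
  | lam : Pat → HCtx → HCtx
  | app : HCtx → Tm → HCtx
  | esub : HCtx → Pat → Tm → HCtx

/-- Plugging a term in a head context. -/
def HCtx.plug : HCtx → Tm → Tm
  | .hole, t => t
  | .lam p H, t => .lam p (H.plug t)
  | .app H u, t => .app (H.plug t) u
  | .esub H p u, t => .esub (H.plug t) p u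

mutual
  /-- K-canonical forms: K ::= x | K t | K[⟨p,q⟩/K]. -/
  inductive IsK : Tm → Prop
    | var (x : ℕ) : IsK (.var x)
    | app {t} (u) : IsK t → IsK (.app t u)
    | esub {t u} (p q) : IsK t → IsK u → IsK (.esub t (.pair p q) u)
  /-- Canonical forms: J ::= λp.J | ⟨t,t⟩ | K | J[⟨p,q⟩/K]. -/
  inductive IsJ : Tm → Prop
    | lam {t} (p) : IsJ t → IsJ (.lam p t)
    | pair (t u : Tm) : IsJ (.pair t u)
    | ofK {t} : IsK t → IsJ t
    | esub {t u} (p q) : IsJ t → IsK u → IsJ (.esub t (.pair p q) u)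
end

/-- Pure K-canonical forms: K′ ::= x | K′ t. -/
inductive IsK' : Tm → Prop
  | var (x : ℕ) : IsK' (.var x)
  | app {t} (u) : IsK' t → IsK' (.app t u)

/-- Pure canonical forms: J′ ::= λp.J′ | ⟨t,t⟩ | K′ | J′[⟨p,q⟩/K′]. -/
inductive IsJ' : Tm → Prop
  | lam {t} (p) : IsJ' t → IsJ' (.lam p t)
  | pair (t u : Tm) : IsJ' (.pair t u)
  | ofK {t} : IsK' t → IsJ' t
  | esub {t u} (p q) : IsJ' t → IsK' u → IsJ' (.esub t (.pair p q) u)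

/-- A multiset type is inhabited if some closed term has it. -/
def MInhab (A : List Ty) : Prop := ∃ u : Tm, u.fv = ∅ ∧ Nonempty (MDeriv Env.empty u A)

/-- An environment is inhabited if all the multiset types it assigns are inhabited. -/
def EnvInhab (Γ : Env) : Prop := ∀ x, Γ x ≠ [] → MInhab (Γ x)

/-- C₁ → ⋯ → Cₙ → σ. -/
def mkArr : List (List Ty) → Ty → Ty
  | [], σ => σ
  | A :: Cs, σ => .arr A (mkArr Cs σ)

/-- A term is solvable if some head context closes it and sends it to a pair. -/
def Solvable (t : Tm) : Prop :=
  ∃ H : HCtx, (H.plug t).fv = ∅ ∧ ∃ u v : Tm, Steps (H.plug t) (.pair u v)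

/-! Part (2) closes each free variable `x` of `t` by an explicit matching `t[x/u]`, where `u` is a
closed inhabitant of `Γ(x)`. For part (1), instead of reducing a closed inhabitant of a product
type to a pair, we use a unary logical relation: call a multiset type valid when it is inhabited
and all its elements are valid, where a product is valid when both components are valid and an
arrow when its target is valid as soon as its source is. Using (2), every type derivable in a
valid environment is valid, so inhabited multiset types are valid; and a pattern typed by a valid
multiset type can only bind its variables to valid, hence inhabited, multiset types. -/

theorem Env.add_eq_empty {Γ Δ : Env} (h : Γ.add Δ = Env.empty) :
    Γ = Env.empty ∧ Δ = Env.empty :=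
  ⟨funext fun x => (List.append_eq_nil_iff.mp (congrFun h x)).1,
    funext fun x => (List.append_eq_nil_iff.mp (congrFun h x)).2⟩

theorem Env.add_empty (Γ : Env) : Γ.add Env.empty = Γ :=
  funext fun _ => List.append_nil _

theorem Env.empty_erase (p : Pat) : Env.empty.erase p = Env.empty :=
  funext fun x => by by_cases hx : x ∈ p.fv <;> simp [Env.erase, Env.empty, hx]

theorem Env.erase_add (Γ Δ : Env) (p : Pat) : (Γ.add Δ).erase p = (Γ.erase p).add (Δ.erase p) :=
  funext fun x => by by_cases hx : x ∈ p.fv <;> simp [Env.erase, Env.add, hx]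

theorem Env.restrict_var (Γ : Env) (x : ℕ) : Γ.restrict (.var x) = Env.single x (Γ x) :=
  funext fun y => by by_cases hy : y = x <;> simp [Env.restrict, Env.single, Pat.fv, hy]

theorem PatTy.apply_eq_nil {Γ : Env} {p : Pat} {A : List Ty} (h : PatTy Γ p A) {x : ℕ}
    (hx : x ∉ p.fv) : Γ x = [] := by
  induction h with
  | var y B => simp_all [Env.single, Pat.fv]
  | pair _ _ _ ih₁ ih₂ =>
    simp only [Pat.fv, Finset.mem_union, not_or] at hx
    simp [Env.add, ih₁ hx.1, ih₂ hx.2]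

mutual

theorem TDeriv.apply_eq_nil {Γ : Env} {t : Tm} {σ : Ty} :
    TDeriv Γ t σ → ∀ {x : ℕ}, x ∉ t.fv → Γ x = []
  | .ax y _, x, hx => by simp_all [Env.single, Tm.fv]
  | @TDeriv.abs _ _ _ p _ d _, x, hx => by
    by_cases hxp : x ∈ p.fv
    · simp [Env.erase, hxp]
    · simp only [Tm.fv, Finset.mem_sdiff, not_and, not_not] at hx
      simp [Env.erase, hxp, d.apply_eq_nil (mt hx hxp)]
  | .app d m, x, hx => by
    simp only [Tm.fv, Finset.mem_union, not_or] at hx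
    simp [Env.add, d.apply_eq_nil hx.1, m.apply_eq_nil hx.2]
  | .pair m n, x, hx => by
    simp only [Tm.fv, Finset.mem_union, not_or] at hx
    simp [Env.add, m.apply_eq_nil hx.1, n.apply_eq_nil hx.2]
  | @TDeriv.esub _ _ _ _ p _ _ d _ m, x, hx => by
    simp only [Tm.fv, Finset.mem_union, Finset.mem_sdiff, not_or, not_and, not_not] at hx
    by_cases hxp : x ∈ p.fv
    · simp [Env.add, Env.erase, hxp, m.apply_eq_nil hx.2]
    · simp [Env.add, Env.erase, hxp, m.apply_eq_nil hx.2, d.apply_eq_nil (mt hx.1 hxp)]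

theorem MDeriv.apply_eq_nil {Γ : Env} {t : Tm} {A : List Ty} :
    MDeriv Γ t A → ∀ {x : ℕ}, x ∉ t.fv → Γ x = []
  | .nil _, _, _ => rfl
  | .cons d m, _, hx => by simp [Env.add, d.apply_eq_nil hx, m.apply_eq_nil hx]

end

theorem MDeriv.env_eq_empty_of_fv_eq_empty {Γ : Env} {t : Tm} {A : List Ty} (m : MDeriv Γ t A)
    (ht : t.fv = ∅) : Γ = Env.empty :=
  funext fun _ => m.apply_eq_nil (by simp [ht])

theorem MDeriv.nonempty_of_append {u : Tm} :
    ∀ {A B : List Ty}, MDeriv Env.empty u (A ++ B) →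
      Nonempty (MDeriv Env.empty u A) ∧ Nonempty (MDeriv Env.empty u B)
  | [], _, m => ⟨⟨.nil u⟩, ⟨m⟩⟩
  | _ :: _, _, m => by
    generalize hE : Env.empty = E at m
    cases m with
    | cons d m' =>
      obtain ⟨rfl, rfl⟩ := Env.add_eq_empty hE.symm
      obtain ⟨⟨m₁⟩, hB⟩ := MDeriv.nonempty_of_append m'
      rw [← Env.add_empty Env.empty]
      exact ⟨⟨.cons d m₁⟩, hB⟩

theorem MDeriv.close_var {Γ : Env} {t u : Tm} {A : List Ty} (x : ℕ) :
    MDeriv Γ t A → MDeriv Env.empty u (Γ x) →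
      Nonempty (MDeriv (Γ.erase (.var x)) (.esub t (.var x) u) A)
  | .nil _, _ => by
    rw [Env.empty_erase]
    exact ⟨.nil _⟩
  | @MDeriv.cons Γ₁ Γ₂ _ _ _ d m, mu => by
    obtain ⟨⟨mu₁⟩, ⟨mu₂⟩⟩ := MDeriv.nonempty_of_append (A := Γ₁ x) mu
    have pt : PatTy (Γ₁.restrict (.var x)) (.var x) (Γ₁ x) :=
      (Env.restrict_var Γ₁ x).symm ▸ .var x (Γ₁ x)
    have d' := TDeriv.esub d pt mu₁
    rw [Env.add_empty] at d'
    obtain ⟨m'⟩ := m.close_var x mu₂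
    rw [Env.erase_add]
    exact ⟨.cons d' m'⟩

theorem MInhab.nil : MInhab [] := ⟨.fail, rfl, ⟨.nil _⟩⟩

theorem EnvInhab.minhab_apply {Γ : Env} (h : EnvInhab Γ) (x : ℕ) : MInhab (Γ x) := by
  by_cases hx : Γ x = []
  · rw [hx]
    exact MInhab.nil
  · exact h x hx

theorem EnvInhab.erase {Γ : Env} (h : EnvInhab Γ) (p : Pat) : EnvInhab (Γ.erase p) := by
  intro x
  by_cases hx : x ∈ p.fv
  · simp [Env.erase, hx]
  · simpa [Env.erase, hx] using h x

theorem MInhab.of_mderiv {Γ : Env} {t : Tm} {A : List Ty} (m : MDeriv Γ t A)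
    (hΓ : EnvInhab Γ) : MInhab A := by
  suffices ∀ (s : Finset ℕ) (Γ : Env) (t : Tm), t.fv ⊆ s → EnvInhab Γ →
      MDeriv Γ t A → MInhab A from this t.fv Γ t le_rfl hΓ m
  intro s
  induction s using Finset.induction_on with
  | empty =>
    intro Γ t ht _ m
    have ht : t.fv = ∅ := Finset.subset_empty.mp ht
    exact ⟨t, ht, ⟨m.env_eq_empty_of_fv_eq_empty ht ▸ m⟩⟩
  | insert x s _ ih =>
    intro Γ t ht hΓ m
    obtain ⟨u, hu, ⟨mu⟩⟩ := hΓ.minhab_apply x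
    obtain ⟨m'⟩ := m.close_var x mu
    refine ih _ _ ?_ (hΓ.erase _) m'
    intro y hy
    simp only [Tm.fv, Pat.fv, hu, Finset.union_empty, Finset.mem_sdiff,
      Finset.mem_singleton] at hy
    exact (Finset.mem_insert.mp (ht hy.1)).resolve_left hy.2

def Ty.Valid : Ty → Prop
  | .base _ => True
  | .prod A B => (MInhab A ∧ ∀ σ ∈ A, σ.Valid) ∧ (MInhab B ∧ ∀ σ ∈ B, σ.Valid)
  | .arr A τ => (MInhab A ∧ ∀ σ ∈ A, σ.Valid) → τ.Valid

def MValid (A : List Ty) : Prop := MInhab A ∧ ∀ σ ∈ A, σ.Valid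

def EnvValid (Γ : Env) : Prop := ∀ x, MValid (Γ x)

theorem Ty.valid_prod {A B : List Ty} : (Ty.prod A B).Valid ↔ MValid A ∧ MValid B := by
  rw [Ty.Valid]
  rfl

theorem Ty.valid_arr {A : List Ty} {τ : Ty} : (Ty.arr A τ).Valid ↔ (MValid A → τ.Valid) := by
  rw [Ty.Valid]
  rfl

theorem MValid.nil : MValid [] := ⟨MInhab.nil, by simp⟩

theorem MValid.of_append {A B : List Ty} (h : MValid (A ++ B)) : MValid A ∧ MValid B := by
  obtain ⟨⟨u, hu, ⟨m⟩⟩, hvalid⟩ := h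
  obtain ⟨⟨mA⟩, ⟨mB⟩⟩ := m.nonempty_of_append
  exact ⟨⟨⟨u, hu, ⟨mA⟩⟩, fun σ hσ => hvalid σ (List.mem_append_left B hσ)⟩,
    ⟨⟨u, hu, ⟨mB⟩⟩, fun σ hσ => hvalid σ (List.mem_append_right A hσ)⟩⟩

theorem EnvValid.empty : EnvValid Env.empty := fun _ => MValid.nil

theorem EnvValid.envInhab {Γ : Env} (h : EnvValid Γ) : EnvInhab Γ := fun x _ => (h x).1

theorem EnvValid.of_add {Γ Δ : Env} (h : EnvValid (Γ.add Δ)) : EnvValid Γ ∧ EnvValid Δ :=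
  ⟨fun x => (h x).of_append.1, fun x => (h x).of_append.2⟩

theorem EnvValid.of_restrict_of_erase {Γ : Env} {p : Pat} (hr : EnvValid (Γ.restrict p))
    (he : EnvValid (Γ.erase p)) : EnvValid Γ := by
  intro x
  by_cases hx : x ∈ p.fv
  · simpa [Env.restrict, hx] using hr x
  · simpa [Env.erase, hx] using he x

theorem PatTy.envValid {Γ : Env} {p : Pat} {A : List Ty} (h : PatTy Γ p A) (hA : MValid A) :
    EnvValid Γ := by
  induction h with
  | var x B =>
    intro y
    by_cases hy : y = x
    · simpa [Env.single, hy] using hA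
    · simpa [Env.single, hy] using MValid.nil
  | @pair Γ Δ p q A B hp hq hpq ihp ihq =>
    have hAB : MValid A ∧ MValid B := Ty.valid_prod.mp (hA.2 _ (List.mem_singleton_self _))
    intro x
    by_cases hx : x ∈ p.fv
    · have hΔx : Δ x = [] := hq.apply_eq_nil (Finset.disjoint_left.mp hpq hx)
      simpa [Env.add, hΔx] using ihp hAB.1 x
    · simpa [Env.add, hp.apply_eq_nil hx] using ihq hAB.2 x

mutual

theorem TDeriv.valid {Γ : Env} {t : Tm} {σ : Ty} : TDeriv Γ t σ → EnvValid Γ → σ.Valid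
  | .ax x σ, hΓ => (hΓ x).2 σ (by simp [Env.single])
  | .abs d pt, hΓ => Ty.valid_arr.mpr fun hA => d.valid (.of_restrict_of_erase (pt.envValid hA) hΓ)
  | .app d m, hΓ => Ty.valid_arr.mp (d.valid hΓ.of_add.1) (m.mvalid hΓ.of_add.2)
  | .pair m n, hΓ => Ty.valid_prod.mpr ⟨m.mvalid hΓ.of_add.1, n.mvalid hΓ.of_add.2⟩
  | .esub d pt m, hΓ =>
    d.valid (.of_restrict_of_erase (pt.envValid (m.mvalid hΓ.of_add.2)) hΓ.of_add.1)

theorem MDeriv.mvalid {Γ : Env} {t : Tm} {A : List Ty} : MDeriv Γ t A → EnvValid Γ → MValid A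
  | .nil _, _ => MValid.nil
  | .cons d m, hΓ =>
    ⟨.of_mderiv (.cons d m) hΓ.envInhab, by
      rintro τ (_ | ⟨_, hτ⟩)
      · exact d.valid hΓ.of_add.1
      · exact (m.mvalid hΓ.of_add.2).2 τ hτ⟩

end

theorem MInhab.mvalid {A : List Ty} (h : MInhab A) : MValid A :=
  let ⟨_, _, ⟨m⟩⟩ := h
  m.mvalid EnvValid.empty

/-- Inhabited pattern types give inhabited environments:
(1) if Γ ⊩ p : A and A is inhabited then every multiset type in the image of Γ is
inhabited; (2) if Γ ⊢ t : A and Γ is inhabited then A is inhabited. -/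
theorem inhabitation_environments :
    (∀ (Γ : Env) (p : Pat) (A : List Ty), PatTy Γ p A → MInhab A → EnvInhab Γ) ∧
    (∀ (Γ : Env) (t : Tm) (A : List Ty), Nonempty (MDeriv Γ t A) → EnvInhab Γ →
      MInhab A) :=
  ⟨fun _ _ _ pt hA => (pt.envValid hA.mvalid).envInhab,
    fun _ _ _ ⟨m⟩ hΓ => .of_mderiv m hΓ⟩
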